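/- For every natural number i ≥ 0 and all subspaces p₁, q₁, r₁, …, p_{i+1}, q_{i+1}, r_{i+1} of ℂ^{2^i} (i.e., of EuclideanSpace ℂ (Fin (2^i))), the iterated restricted distributivity test formula satisfies α^{i+1}(p_{i+1},q_{i+1},r_{i+1}) = ⊥. -/

import Mathlib

/-- The distributivity test formula `α(p,q,r) = (a ⊔ b) ⊓ (aᗮ ⊔ bᗮ)` where
`a = p ⊔ (q ⊓ r)` and `b = (p ⊔ q) ⊓ (p ⊔ r)`. -/
noncomputable def distribTest {E : Type*} [NormedAddCommGroup E] [InnerProductSpace ℂ E]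
    (p q r : Submodule ℂ E) : Submodule ℂ E :=
  ((p ⊔ (q ⊓ r)) ⊔ ((p ⊔ q) ⊓ (p ⊔ r))) ⊓ ((p ⊔ (q ⊓ r))ᗮ ⊔ ((p ⊔ q) ⊓ (p ⊔ r))ᗮ)

/-- The restriction `α|_γ(p,q,r)` of the distributivity test formula to `γ`:
write `α` in negation normal form `((p ⊔ q) ⊓ (p ⊔ r)) ⊓ (pᗮ ⊓ (qᗮ ⊔ rᗮ))` and
replace each variable `x` by `x ⊓ γ` and each negated variable `xᗮ` by `xᗮ ⊓ γ`. -/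
noncomputable def distribTestRes {E : Type*} [NormedAddCommGroup E] [InnerProductSpace ℂ E]
    (γ p q r : Submodule ℂ E) : Submodule ℂ E :=
  (((p ⊓ γ) ⊔ (q ⊓ γ)) ⊓ ((p ⊓ γ) ⊔ (r ⊓ γ))) ⊓ ((pᗮ ⊓ γ) ⊓ ((qᗮ ⊓ γ) ⊔ (rᗮ ⊓ γ)))

/-- The iterated restricted distributivity test formula:
`distribTestIter p q r m` is `α^(m+1)(p (m+1), q (m+1), r (m+1))`, where
`α¹(p₁,q₁,r₁) = α(p₁,q₁,r₁)` and `αᵐ(pₘ,qₘ,rₘ) = α|_(α^(m-1))(pₘ,qₘ,rₘ)`.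
The variables `pⱼ, qⱼ, rⱼ` (for `1 ≤ j ≤ m+1`) are given as `p j, q j, r j`. -/
noncomputable def distribTestIter {E : Type*} [NormedAddCommGroup E] [InnerProductSpace ℂ E]
    (p q r : ℕ → Submodule ℂ E) : ℕ → Submodule ℂ E
  | 0 => distribTest (p 1) (q 1) (r 1)
  | (m + 1) => distribTestRes (distribTestIter p q r m) (p (m + 2)) (q (m + 2)) (r (m + 2))

/-! Every test formula sits below `b = (x ⊔ y) ⊓ (x ⊔ z)` and is orthogonal to
`a = x ⊔ (y ⊓ z) ≤ b`, for subspaces `x, y, z` of the current domain `γ`. So its dimension is at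
most `dim b - dim a ≤ dim x`, while orthogonality to `x ≤ γ` gives `dim α + dim x ≤ dim γ`. Hence
each restriction at least halves the dimension, and after `i + 1` steps nothing is left of
`ℂ^(2^i)`. -/

open Module Submodule

section LinearAlgebra

variable {K V : Type*} [DivisionRing K] [AddCommGroup V] [Module K V] [FiniteDimensional K V]

theorem Submodule.finrank_add_finrank_le_of_disjoint_of_sup_le {s t u : Submodule K V}
    (hst : Disjoint s t) (h : s ⊔ t ≤ u) : finrank K s + finrank K t ≤ finrank K u := by
  rw [← finrank_sup_add_finrank_inf_eq, hst.eq_bot, finrank_bot, add_zero]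
  exact finrank_mono h

theorem Submodule.finrank_sup_inf_sup_le (x y z : Submodule K V) :
    finrank K ↥((x ⊔ y) ⊓ (x ⊔ z)) ≤ finrank K ↥(x ⊔ y ⊓ z) + finrank K x := by
  have hsup : (x ⊔ y) ⊔ (x ⊔ z) = x ⊔ (y ⊔ z) := by rw [sup_sup_sup_comm, sup_idem]
  have hb := finrank_sup_add_finrank_inf_eq (x ⊔ y) (x ⊔ z)
  rw [hsup] at hb
  have ha := finrank_sup_add_finrank_inf_eq x (y ⊓ z)
  have hxy := finrank_sup_add_finrank_inf_eq x y
  have hxz := finrank_sup_add_finrank_inf_eq x z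
  have hyz := finrank_sup_add_finrank_inf_eq y z
  have : finrank K ↥(y ⊔ z) ≤ finrank K ↥(x ⊔ (y ⊔ z)) := finrank_mono le_sup_right
  have : finrank K ↥(x ⊓ (y ⊓ z)) ≤ finrank K ↥(x ⊓ y) :=
    finrank_mono (inf_le_inf_left x inf_le_left)
  have : finrank K ↥(x ⊓ (y ⊓ z)) ≤ finrank K ↥(x ⊓ z) :=
    finrank_mono (inf_le_inf_left x inf_le_right)
  omega

theorem Submodule.finrank_le_of_le_sup_inf_sup_of_disjoint {x y z t : Submodule K V}
    (ht : t ≤ (x ⊔ y) ⊓ (x ⊔ z)) (hdisj : Disjoint t (x ⊔ y ⊓ z)) :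
    finrank K t ≤ finrank K x := by
  have := finrank_add_finrank_le_of_disjoint_of_sup_le hdisj (sup_le ht sup_inf_le)
  have := finrank_sup_inf_sup_le x y z
  omega

end LinearAlgebra

section InnerProductSpace

variable {𝕜 E : Type*} [RCLike 𝕜] [NormedAddCommGroup E] [InnerProductSpace 𝕜 E]

theorem Submodule.orthogonal_sup_orthogonal_le_orthogonal_inf (s t : Submodule 𝕜 E) :
    sᗮ ⊔ tᗮ ≤ (s ⊓ t)ᗮ :=
  sup_le (orthogonal_le inf_le_left) (orthogonal_le inf_le_right)

variable [FiniteDimensional 𝕜 E]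

theorem Submodule.two_mul_finrank_le_of_le_sup_inf_sup_of_le_orthogonal
    {γ x y z t : Submodule 𝕜 E} (hx : x ≤ γ) (htγ : t ≤ γ) (ht : t ≤ (x ⊔ y) ⊓ (x ⊔ z))
    (hperp : t ≤ (x ⊔ y ⊓ z)ᗮ) : 2 * finrank 𝕜 t ≤ finrank 𝕜 γ := by
  have hdisj : Disjoint t (x ⊔ y ⊓ z) := (orthogonal_disjoint _).symm.mono_left hperp
  have h₁ := finrank_le_of_le_sup_inf_sup_of_disjoint ht hdisj
  have h₂ := finrank_add_finrank_le_of_disjoint_of_sup_le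
    (hdisj.mono_right le_sup_left) (sup_le htγ hx)
  omega

end InnerProductSpace

section DistribTest

variable {E : Type*} [NormedAddCommGroup E] [InnerProductSpace ℂ E]

theorem distribTest_eq (p q r : Submodule ℂ E) :
    distribTest p q r = (p ⊔ q) ⊓ (p ⊔ r) ⊓ (p ⊔ q ⊓ r)ᗮ := by
  have hab : p ⊔ q ⊓ r ≤ (p ⊔ q) ⊓ (p ⊔ r) := sup_inf_le
  rw [distribTest, sup_eq_right.mpr hab, sup_eq_left.mpr (orthogonal_le hab)]

variable [FiniteDimensional ℂ E]

theorem two_mul_finrank_distribTest_le (p q r : Submodule ℂ E) :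
    2 * finrank ℂ (distribTest p q r) ≤ finrank ℂ E := by
  rw [← finrank_top ℂ E, distribTest_eq]
  exact two_mul_finrank_le_of_le_sup_inf_sup_of_le_orthogonal le_top le_top inf_le_left
    inf_le_right

theorem two_mul_finrank_distribTestRes_le (γ p q r : Submodule ℂ E) :
    2 * finrank ℂ (distribTestRes γ p q r) ≤ finrank ℂ γ := by
  refine two_mul_finrank_le_of_le_sup_inf_sup_of_le_orthogonal inf_le_right
    (inf_le_right.trans (inf_le_left.trans inf_le_right)) inf_le_left (inf_le_right.trans ?_)
  rw [← inf_orthogonal]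
  refine inf_le_inf (inf_le_left.trans (orthogonal_le inf_le_left)) ?_
  exact (sup_le_sup inf_le_left inf_le_left).trans
    ((sup_le_sup (orthogonal_le inf_le_left) (orthogonal_le inf_le_left)).trans
      (orthogonal_sup_orthogonal_le_orthogonal_inf _ _))

theorem two_pow_mul_finrank_distribTestIter_le (p q r : ℕ → Submodule ℂ E) (m : ℕ) :
    2 ^ (m + 1) * finrank ℂ (distribTestIter p q r m) ≤ finrank ℂ E := by
  induction m with
  | zero =>
    rw [zero_add, pow_one]
    exact two_mul_finrank_distribTest_le (p 1) (q 1) (r 1)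
  | succ m ih =>
    calc 2 ^ (m + 2) * finrank ℂ (distribTestIter p q r (m + 1))
        = 2 ^ (m + 1) * (2 * finrank ℂ (distribTestIter p q r (m + 1))) := by ring
      _ ≤ 2 ^ (m + 1) * finrank ℂ (distribTestIter p q r m) :=
        Nat.mul_le_mul_left _ (two_mul_finrank_distribTestRes_le _ _ _ _)
      _ ≤ finrank ℂ E := ih

end DistribTest

theorem distribTestIter_eq_bot (i : ℕ)
    (p q r : ℕ → Submodule ℂ (EuclideanSpace ℂ (Fin (2 ^ i)))) :
    distribTestIter p q r i = ⊥ := by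
  have h := two_pow_mul_finrank_distribTestIter_le p q r i
  rw [finrank_euclideanSpace_fin, pow_succ, mul_assoc] at h
  have : 2 * finrank ℂ (distribTestIter p q r i) ≤ 1 :=
    Nat.le_of_mul_le_mul_left (h.trans_eq (mul_one _).symm) (by positivity)
  exact finrank_eq_zero.mp (by omega)
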